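/- arXiv:2303.03643 — 9 statements merged into one kernel-verified Lean document; each statement's English description precedes it below -/
import Mathlib

section
/- Let q ≥ 2 and r ≥ 2 be integers. If δ_1, …, δ_{r−1} are nonnegative integers and δ_r is a positive integer satisfying δ_1(q−1) + δ_2(q²−1) + ⋯ + δ_{r−1}(q^{r−1}−1) = δ_r(q^r−1), then δ_1 + δ_2 + ⋯ + δ_{r−1} ≥ q + 1. Moreover the bound is attained: there exist nonnegative integers δ_1, …, δ_{r−1} and δ_r = 1 satisfying the displayed equation with δ_1 + ⋯ + δ_{r−1} = q + 1. -/
/-- The arithmetic minimization in the proof of Lemma 3.4: for any admissible exponent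
vector `(δ₁, …, δ_{r-1}, δ_r)` of a basic `J`-invariant, the sum `δ₁ + ⋯ + δ_{r-1}` is
at least `q + 1`, and this bound is attained with `δ_r = 1`. -/
theorem stmt0 (q r : ℕ) (hq : 2 ≤ q) (hr : 2 ≤ r) :
    (∀ (δ : ℕ → ℕ) (δr : ℕ), 0 < δr →
        (∑ i ∈ Finset.Icc 1 (r - 1), δ i * (q ^ i - 1)) = δr * (q ^ r - 1) →
        q + 1 ≤ ∑ i ∈ Finset.Icc 1 (r - 1), δ i) ∧
    (∃ δ : ℕ → ℕ,
        (∑ i ∈ Finset.Icc 1 (r - 1), δ i * (q ^ i - 1)) = 1 * (q ^ r - 1) ∧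
        (∑ i ∈ Finset.Icc 1 (r - 1), δ i) = q + 1) := by
  have ha1 : q ≤ q ^ (r - 1) := Nat.le_self_pow (by omega) q
  have hra : q ^ r = q * q ^ (r - 1) := by
    rw [← pow_succ']
    congr 1
    omega
  have hqa : q ≤ q * q ^ (r - 1) := Nat.le_mul_of_pos_right q (by positivity)
  have hms : q * (q ^ (r - 1) - 1) = q * q ^ (r - 1) - q := by
    rw [Nat.mul_sub, mul_one]
  constructor
  · intro δ δr hδr heq
    by_contra h
    push_neg at h
    have h1 : (∑ i ∈ Finset.Icc 1 (r - 1), δ i * (q ^ i - 1)) ≤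
        (∑ i ∈ Finset.Icc 1 (r - 1), δ i) * (q ^ (r - 1) - 1) := by
      rw [Finset.sum_mul]
      apply Finset.sum_le_sum
      intro i hi
      exact Nat.mul_le_mul_left _ (Nat.sub_le_sub_right
        (Nat.pow_le_pow_right (by omega) (Finset.mem_Icc.mp hi).2) 1)
    have h2 : q ^ r - 1 ≤ δr * (q ^ r - 1) := Nat.le_mul_of_pos_left _ hδr
    have h3 : (∑ i ∈ Finset.Icc 1 (r - 1), δ i) * (q ^ (r - 1) - 1) ≤ q * (q ^ (r - 1) - 1) :=
      Nat.mul_le_mul_right _ (by omega)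
    have hfin : q * q ^ (r - 1) - 1 ≤ q * q ^ (r - 1) - q := by
      calc q * q ^ (r - 1) - 1 = q ^ r - 1 := by rw [hra]
        _ ≤ δr * (q ^ r - 1) := h2
        _ = _ := heq.symm
        _ ≤ _ := h1
        _ ≤ q * (q ^ (r - 1) - 1) := h3
        _ = q * q ^ (r - 1) - q := hms
    set m := q * q ^ (r - 1) with hm
    clear_value m
    omega
  · refine ⟨fun i => (if i = 1 then 1 else 0) + (if i = r - 1 then q else 0), ?_, ?_⟩
    · have : (∑ i ∈ Finset.Icc 1 (r - 1),
          ((if i = 1 then 1 else 0) + (if i = r - 1 then q else 0)) * (q ^ i - 1)) =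
          (q ^ 1 - 1) + q * (q ^ (r - 1) - 1) := by
        simp only [add_mul, Finset.sum_add_distrib, ite_mul, one_mul, zero_mul,
          Finset.sum_ite_eq', Finset.mem_Icc]
        rw [if_pos ⟨le_refl 1, by omega⟩, if_pos ⟨by omega, le_refl _⟩]
      rw [this, pow_one, hms, one_mul, hra]
      omega
    · simp only [Finset.sum_add_distrib, Finset.sum_ite_eq', Finset.mem_Icc]
      rw [if_pos ⟨le_refl 1, by omega⟩, if_pos ⟨by omega, le_refl _⟩]
      omega
end

section
/- Let R be a commutative Artinian local ring of characteristic p, q = p^e, and r ≥ 1. Let t, g_1, …, g_{r−1}, g'_1, …, g'_{r−1} ∈ R, and set φ = tX + Σ_{i=1}^{r−1} g_i X^{q^i} + X^{q^r} and ψ = tX + Σ_{i=1}^{r−1} g'_i X^{q^i} + X^{q^r} in R[X]. If u ∈ R[X] is a q-polynomial that is a compositional unit and satisfies u∘φ = ψ∘u, then u = cX for some unit c of R with c^{q^r−1} = 1 and c·g_i = g'_i·c^{q^i} for every 1 ≤ i ≤ r−1. -/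
/-!
Comparing leading coefficients in `u ∘ φ = ψ ∘ u`, with `φ`, `ψ` monic of degree `q^r ≥ 2`,
gives `a = a^(q^r)` for the leading coefficient `a` of `u`. Since `u` has a compositional
inverse, its reduction modulo the maximal ideal has degree `1`, so if `deg u > 1` then `a`
lies in the maximal ideal; but then `a (1 - a^(q^r-1)) = 0` with the second factor a unit,
so `a = 0`, which is absurd. Hence `u = cX` (a `q`-polynomial has no constant term), and
comparing the coefficients of `X^(q^i)` in `c φ(X) = ψ(cX)` gives the relations on `c`.
-/

/-- A `q`-polynomial: all nonzero coefficients sit in degrees that are powers of `q`. -/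
def IsqPoly (q : ℕ) {R : Type*} [Semiring R] (f : Polynomial R) : Prop :=
  ∀ n ∈ f.support, ∃ i : ℕ, n = q ^ i

open Polynomial

theorem IsLocalRing.eq_zero_of_eq_pow_of_mem_maximalIdeal {R : Type*} [CommRing R]
    [IsLocalRing R] {a : R} {k : ℕ} (hk : 2 ≤ k) (ha : a ∈ IsLocalRing.maximalIdeal R)
    (h : a = a ^ k) : a = 0 := by
  have hunit : IsUnit (1 - a ^ (k - 1)) :=
    IsLocalRing.isUnit_one_sub_self_of_mem_nonunits _
      ((IsLocalRing.mem_maximalIdeal _).mp (Ideal.pow_mem_of_mem _ ha _ (by omega)))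
  refine hunit.mul_left_eq_zero.mp ?_
  rw [mul_sub, mul_one, ← pow_succ', Nat.sub_add_cancel (by omega), ← h, sub_self]

namespace Polynomial

section CommRing

variable {R : Type*} [CommRing R]

theorem natDegree_ne_zero_of_comp_eq_X [Nontrivial R] {u v : R[X]} (h : u.comp v = X) :
    u.natDegree ≠ 0 := by
  intro hu
  have := h ▸ natDegree_comp_le (p := u) (q := v)
  rw [hu, zero_mul, natDegree_X] at this
  omega

theorem natDegree_eq_one_of_comp_eq_X [IsDomain R] {u v : R[X]} (h : u.comp v = X) :
    u.natDegree = 1 :=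
  Nat.eq_one_of_mul_eq_one_right (by rw [← natDegree_comp, h, natDegree_X])

theorem leadingCoeff_mem_maximalIdeal_of_comp_eq_X [IsLocalRing R] {u v : R[X]}
    (h : u.comp v = X) (hu : 1 < u.natDegree) :
    u.leadingCoeff ∈ IsLocalRing.maximalIdeal R := by
  have hmap : (u.map (IsLocalRing.residue R)).natDegree = 1 :=
    natDegree_eq_one_of_comp_eq_X (v := v.map (IsLocalRing.residue R)) (by
      rw [← map_comp, h, map_X])
  have hcoeff := coeff_eq_zero_of_natDegree_lt (hmap ▸ hu)
  rwa [coeff_map, IsLocalRing.residue_eq_zero_iff] at hcoeff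

theorem leadingCoeff_eq_pow_of_comp_eq_comp {u φ ψ : R[X]} (hφ : φ.Monic) (hψ : ψ.Monic)
    (hdeg : φ.natDegree = ψ.natDegree) (hφ0 : φ.natDegree ≠ 0) (hu : u.natDegree ≠ 0)
    (h : u.comp φ = ψ.comp u) : u.leadingCoeff = u.leadingCoeff ^ ψ.natDegree := by
  have hleft := coeff_comp_degree_mul_degree (p := u) hφ0
  have hright := coeff_comp_degree_mul_degree (p := ψ) hu
  rw [hφ.leadingCoeff, one_pow, mul_one] at hleft
  rw [hψ.leadingCoeff, one_mul] at hright
  rw [h, hdeg, mul_comm] at hleft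
  exact hleft.symm.trans hright

theorem natDegree_eq_one_of_comp_eq_comp [IsLocalRing R] {u v φ ψ : R[X]} (hv : u.comp v = X)
    (hφ : φ.Monic) (hψ : ψ.Monic) (hdeg : φ.natDegree = ψ.natDegree) (hψ2 : 2 ≤ ψ.natDegree)
    (h : u.comp φ = ψ.comp u) : u.natDegree = 1 := by
  have hu0 := natDegree_ne_zero_of_comp_eq_X hv
  by_contra hu1
  have hlt : 1 < u.natDegree := by omega
  have hzero := IsLocalRing.eq_zero_of_eq_pow_of_mem_maximalIdeal hψ2
    (leadingCoeff_mem_maximalIdeal_of_comp_eq_X hv hlt)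
    (leadingCoeff_eq_pow_of_comp_eq_comp hφ hψ hdeg (by omega) hu0 h)
  rw [leadingCoeff_eq_zero] at hzero
  exact hu0 (hzero ▸ natDegree_zero)

theorem isUnit_of_C_mul_X_comp_eq_X {c : R} {v : R[X]} (h : (C c * X).comp v = X) :
    IsUnit c := by
  have h1 := congrArg (coeff · 1) h
  simp only [mul_comp, C_comp, X_comp, coeff_C_mul, coeff_X_one] at h1
  exact IsUnit.of_mul_eq_one _ h1

theorem coeff_mul_eq_coeff_mul_pow_of_C_mul_X_comp {c : R} {φ ψ : R[X]}
    (h : (C c * X).comp φ = ψ.comp (C c * X)) (n : ℕ) :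
    c * φ.coeff n = ψ.coeff n * c ^ n := by
  simpa only [mul_comp, C_comp, X_comp, coeff_C_mul, comp_C_mul_X_coeff] using
    congrArg (coeff · n) h

end CommRing

end Polynomial

section IsqPoly

variable {R : Type*} [Semiring R] {q : ℕ} {f : R[X]}

theorem IsqPoly.coeff_zero (hq : q ≠ 0) (hf : IsqPoly q f) : f.coeff 0 = 0 := by
  by_contra h
  obtain ⟨i, hi⟩ := hf 0 (mem_support_iff.mpr h)
  exact pow_ne_zero i hq hi.symm

theorem IsqPoly.eq_C_mul_X (hq : q ≠ 0) (hf : IsqPoly q f) (h1 : f.natDegree ≤ 1) :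
    f = C (f.coeff 1) * X := by
  conv_lhs => rw [eq_X_add_C_of_natDegree_le_one h1, hf.coeff_zero hq, map_zero, add_zero]

end IsqPoly

section drinfeldPoly

variable {R : Type*} [CommRing R] {q r : ℕ}

/-- The image `φ_T` of `T` under a normalized rank-`r` Drinfeld module, as a `q`-polynomial. -/
noncomputable def drinfeldPoly (q r : ℕ) (t : R) (g : ℕ → R) : R[X] :=
  C t * X + (∑ i ∈ Finset.Icc 1 (r - 1), C (g i) * X ^ q ^ i) + X ^ q ^ r

theorem degree_drinfeldPoly_lowerTerms_lt [Nontrivial R] (hq : 2 ≤ q) (hr : 1 ≤ r) (t : R)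
    (g : ℕ → R) :
    (C t * X + ∑ i ∈ Finset.Icc 1 (r - 1), C (g i) * X ^ q ^ i).degree <
      (X ^ q ^ r : R[X]).degree := by
  rw [degree_X_pow]
  refine (degree_add_le _ _).trans_lt (max_lt ?_ ?_)
  · exact (degree_C_mul_X_le t).trans_lt (by exact_mod_cast Nat.one_lt_pow (by omega) (by omega))
  · refine (degree_sum_le _ _).trans_lt ((Finset.sup_lt_iff (WithBot.bot_lt_coe _)).mpr ?_)
    intro i hi
    rw [Finset.mem_Icc] at hi
    exact (degree_C_mul_X_pow_le _ _).trans_lt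
      (by exact_mod_cast Nat.pow_lt_pow_right (by omega) (by omega))

theorem monic_drinfeldPoly [Nontrivial R] (hq : 2 ≤ q) (hr : 1 ≤ r) (t : R) (g : ℕ → R) :
    (drinfeldPoly q r t g).Monic :=
  (monic_X_pow _).add_of_right (degree_drinfeldPoly_lowerTerms_lt hq hr t g)

theorem natDegree_drinfeldPoly [Nontrivial R] (hq : 2 ≤ q) (hr : 1 ≤ r) (t : R) (g : ℕ → R) :
    (drinfeldPoly q r t g).natDegree = q ^ r := by
  rw [drinfeldPoly,
    natDegree_add_eq_right_of_degree_lt (degree_drinfeldPoly_lowerTerms_lt hq hr t g),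
    natDegree_X_pow]

theorem coeff_drinfeldPoly_pow (hq : 2 ≤ q) (t : R) (g : ℕ → R) {j : ℕ}
    (hj : j ∈ Finset.Icc 1 (r - 1)) : (drinfeldPoly q r t g).coeff (q ^ j) = g j := by
  have hinj := Nat.pow_right_injective hq
  have hj' := Finset.mem_Icc.mp hj
  have h1 : q ^ j ≠ 1 := (Nat.one_lt_pow (by omega) (by omega)).ne'
  have hr : q ^ j ≠ q ^ r := fun h => by have := hinj h; omega
  simp [drinfeldPoly, coeff_X, h1.symm, hr, hinj.eq_iff, hj]

theorem coeff_drinfeldPoly_pow_self [Nontrivial R] (hq : 2 ≤ q) (hr : 1 ≤ r) (t : R)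
    (g : ℕ → R) : (drinfeldPoly q r t g).coeff (q ^ r) = 1 :=
  natDegree_drinfeldPoly hq hr t g ▸ (monic_drinfeldPoly hq hr t g).coeff_natDegree

end drinfeldPoly

open Polynomial in
theorem stmt2_general (p : ℕ) (hp : p.Prime) (e : ℕ) (he : 0 < e) (q : ℕ) (hq : q = p ^ e)
    (R : Type*) [CommRing R] [IsLocalRing R]
    (r : ℕ) (hr : 1 ≤ r) (t : R) (g g' : ℕ → R)
    (φ ψ : Polynomial R)
    (hφ : φ = C t * X + (∑ i ∈ Finset.Icc 1 (r - 1), C (g i) * X ^ q ^ i) + X ^ q ^ r)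
    (hψ : ψ = C t * X + (∑ i ∈ Finset.Icc 1 (r - 1), C (g' i) * X ^ q ^ i) + X ^ q ^ r)
    (u : Polynomial R) (hu : IsqPoly q u)
    (hunit : ∃ v : Polynomial R, IsqPoly q v ∧ u.comp v = X ∧ v.comp u = X)
    (hcomm : u.comp φ = ψ.comp u) :
    ∃ c : R, IsUnit c ∧ u = C c * X ∧ c ^ (q ^ r - 1) = 1 ∧
      ∀ i ∈ Finset.Icc 1 (r - 1), c * g i = g' i * c ^ q ^ i := by
  obtain ⟨v, -, huv, -⟩ := hunit
  have hq2 : 2 ≤ q := hq ▸ hp.two_le.trans (Nat.le_self_pow he.ne' p)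
  replace hφ : φ = drinfeldPoly q r t g := hφ
  replace hψ : ψ = drinfeldPoly q r t g' := hψ
  have hdeg : u.natDegree = 1 := by
    subst hφ hψ
    refine natDegree_eq_one_of_comp_eq_comp huv (monic_drinfeldPoly hq2 hr t g)
      (monic_drinfeldPoly hq2 hr t g') ?_ ?_ hcomm
    · rw [natDegree_drinfeldPoly hq2 hr, natDegree_drinfeldPoly hq2 hr]
    · rw [natDegree_drinfeldPoly hq2 hr]
      exact Nat.one_lt_pow (by omega) (by omega)
  have hu_eq := hu.eq_C_mul_X (by omega) hdeg.le
  set c := u.coeff 1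
  rw [hu_eq] at huv hcomm
  have hc := isUnit_of_C_mul_X_comp_eq_X huv
  have hcoeff := coeff_mul_eq_coeff_mul_pow_of_C_mul_X_comp hcomm
  refine ⟨c, hc, hu_eq, hc.mul_left_cancel ?_, fun i hi => ?_⟩
  · have htop := hcoeff (q ^ r)
    rw [hφ, hψ, coeff_drinfeldPoly_pow_self hq2 hr, coeff_drinfeldPoly_pow_self hq2 hr,
      one_mul] at htop
    rw [mul_one, ← pow_succ', Nat.sub_add_cancel (Nat.one_le_pow _ _ (by omega)), ← htop,
      mul_one]
  · simpa only [hφ, hψ, coeff_drinfeldPoly_pow hq2 _ _ hi] using hcoeff (q ^ i)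

open Polynomial in
/-- Rigidity of isomorphisms between normalized rank-`r` Drinfeld modules over an Artinian
local ring: any `q`-polynomial compositional unit `u` with `u ∘ φ = ψ ∘ u` is linear,
`u = cX`, with `c` a unit satisfying `c^(q^r-1) = 1` and `c·gᵢ = gᵢ'·c^(qⁱ)`. -/
theorem stmt2 (p : ℕ) (hp : p.Prime) (e : ℕ) (he : 0 < e) (q : ℕ) (hq : q = p ^ e)
    (R : Type*) [CommRing R] [IsArtinianRing R] [IsLocalRing R] [CharP R p]
    (r : ℕ) (hr : 1 ≤ r) (t : R) (g g' : ℕ → R)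
    (φ ψ : Polynomial R)
    (hφ : φ = C t * X + (∑ i ∈ Finset.Icc 1 (r - 1), C (g i) * X ^ q ^ i) + X ^ q ^ r)
    (hψ : ψ = C t * X + (∑ i ∈ Finset.Icc 1 (r - 1), C (g' i) * X ^ q ^ i) + X ^ q ^ r)
    (u : Polynomial R) (hu : IsqPoly q u)
    (hunit : ∃ v : Polynomial R, IsqPoly q v ∧ u.comp v = X ∧ v.comp u = X)
    (hcomm : u.comp φ = ψ.comp u) :
    ∃ c : R, IsUnit c ∧ u = C c * X ∧ c ^ (q ^ r - 1) = 1 ∧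
      ∀ i ∈ Finset.Icc 1 (r - 1), c * g i = g' i * c ^ q ^ i :=
  stmt2_general p hp e he q hq R r hr t g g' φ ψ hφ hψ u hu hunit hcomm
end

section
/- Let R be a commutative ring, μ ∈ R, and let k ≥ 1, q ≥ 2, r ≥ 2 be integers. Let δ_1, …, δ_{r−1} be nonnegative integers and δ_r an integer with Σ_{i=1}^{r−1} δ_i(q^i−1) = δ_r(q^r−1). Let c ∈ R satisfy c^{q^r−1} = 1, let g_1, …, g_{r−1}, u_1, …, u_{r−1} ∈ R, and set g'_i = c^{q^i−1}·g_i + μ^k·u_i for 1 ≤ i ≤ r−1. Then ∏_{i=1}^{r−1} (g'_i)^{δ_i} − ∏_{i=1}^{r−1} g_i^{δ_i} lies in the ideal μ^k R. -/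
/-- Key congruence in case 2 of Proposition 3.9: if `Σ δᵢ(qⁱ-1) = δ_r(q^r-1)` and
`c^(q^r-1) = 1`, and `gᵢ' = c^(qⁱ-1)·gᵢ + μ^k·uᵢ`, then the difference of products
`∏ (gᵢ')^{δᵢ} - ∏ gᵢ^{δᵢ}` lies in the ideal `(μ^k)`. -/
theorem stmt3 (R : Type*) [CommRing R] (μ : R) (k q r : ℕ)
    (hk : 1 ≤ k) (hq : 2 ≤ q) (hr : 2 ≤ r)
    (δ : ℕ → ℕ) (δr : ℤ)
    (hδ : (∑ i ∈ Finset.Icc 1 (r - 1), (δ i : ℤ) * ((q : ℤ) ^ i - 1))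
        = δr * ((q : ℤ) ^ r - 1))
    (c : R) (hc : c ^ (q ^ r - 1) = 1)
    (g u g' : ℕ → R)
    (hg' : ∀ i ∈ Finset.Icc 1 (r - 1), g' i = c ^ (q ^ i - 1) * g i + μ ^ k * u i) :
    (∏ i ∈ Finset.Icc 1 (r - 1), g' i ^ δ i) - (∏ i ∈ Finset.Icc 1 (r - 1), g i ^ δ i)
      ∈ Ideal.span {μ ^ k} := by
  have hq1 : (1:ℤ) ≤ (q:ℤ) := by exact_mod_cast Nat.one_le_of_lt hq
  -- δr is nonnegative
  have hqr : (1:ℤ) < (q:ℤ) ^ r := by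
    have : (1:ℤ) < (q:ℤ) := by exact_mod_cast hq
    exact one_lt_pow₀ this (by omega)
  have hδr : 0 ≤ δr := by
    by_contra h
    push_neg at h
    have hL : 0 ≤ ∑ i ∈ Finset.Icc 1 (r - 1), (δ i : ℤ) * ((q : ℤ) ^ i - 1) := by
      apply Finset.sum_nonneg
      intro i _
      have : (1:ℤ) ≤ (q:ℤ) ^ i := one_le_pow₀ hq1
      have := (δ i).cast_nonneg (α := ℤ)
      nlinarith
    have hR : δr * ((q : ℤ) ^ r - 1) < 0 :=
      mul_neg_of_neg_of_pos h (by linarith)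
    omega
  -- natural-number version of the exponent identity
  have hcast : ∀ i : ℕ, ((q ^ i - 1 : ℕ) : ℤ) = (q:ℤ) ^ i - 1 := by
    intro i
    have h1 : 1 ≤ q ^ i := Nat.one_le_pow _ _ (by omega)
    push_cast [Nat.cast_sub h1]
    ring
  have hnat : (∑ i ∈ Finset.Icc 1 (r - 1), δ i * (q ^ i - 1))
      = δr.toNat * (q ^ r - 1) := by
    have : ((∑ i ∈ Finset.Icc 1 (r - 1), δ i * (q ^ i - 1) : ℕ) : ℤ)
        = ((δr.toNat * (q ^ r - 1) : ℕ) : ℤ) := by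
      push_cast [hcast, Int.toNat_of_nonneg hδr]
      exact hδ
    exact_mod_cast this
  rw [← Ideal.Quotient.eq]
  set I := Ideal.span {μ ^ k}
  let f := Ideal.Quotient.mk I
  have hμ : f (μ ^ k) = 0 := by
    apply Ideal.Quotient.eq_zero_iff_mem.2
    exact Ideal.subset_span rfl
  have key : ∀ i ∈ Finset.Icc 1 (r - 1), f (g' i ^ δ i)
      = f c ^ (δ i * (q ^ i - 1)) * f (g i ^ δ i) := by
    intro i hi
    rw [hg' i hi]
    simp only [map_pow, map_add, map_mul, hμ, zero_mul, add_zero]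
    rw [mul_pow, ← pow_mul, mul_comm (q ^ i - 1)]
  calc f (∏ i ∈ Finset.Icc 1 (r - 1), g' i ^ δ i)
      = ∏ i ∈ Finset.Icc 1 (r - 1), f c ^ (δ i * (q ^ i - 1)) * f (g i ^ δ i) := by
        rw [map_prod]; exact Finset.prod_congr rfl key
    _ = (f c ^ (∑ i ∈ Finset.Icc 1 (r - 1), δ i * (q ^ i - 1)))
        * ∏ i ∈ Finset.Icc 1 (r - 1), f (g i ^ δ i) := by
        rw [Finset.prod_mul_distrib, Finset.prod_pow_eq_pow_sum]
    _ = f (∏ i ∈ Finset.Icc 1 (r - 1), g i ^ δ i) := by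
        rw [hnat, mul_comm δr.toNat, pow_mul, ← map_pow, hc, map_one, one_pow,
          one_mul, map_prod]
end

section
/- Let W be a complete discrete valuation ring of characteristic p with uniformizer μ and algebraically closed residue field, let q = p^e, r ≥ 1, n ≥ 1, and t ∈ W. Let ψ̄ = t̄X + X^{q^r} ∈ (W/(μ^n))[X], where t̄ is the reduction of t. Then the set of q-polynomials u over W/(μ^n) that are compositional units and satisfy u∘ψ̄ = ψ̄∘u is exactly {cX : c ∈ W/(μ^n), c^{q^r−1} = 1}, and this set has exactly q^r − 1 elements. -/
/-- The set of isomorphisms from `φ` to `ψ` over `R`: `q`-polynomials that are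
compositional units and intertwine `φ` and `ψ`. -/
def IsoSet (q : ℕ) {R : Type*} [CommRing R] (φ ψ : Polynomial R) : Set (Polynomial R) :=
  {u | IsqPoly q u ∧
    (∃ v : Polynomial R, IsqPoly q v ∧ u.comp v = Polynomial.X ∧ v.comp u = Polynomial.X) ∧
    u.comp φ = ψ.comp u}

/-!
Reducing modulo the maximal ideal turns a compositional unit `u` into a linear polynomial, so its
coefficients in degrees `> 1` are nilpotent. A `q`-polynomial is additive in characteristic `p`, so
comparing coefficients of `X ^ (d * q ^ r)` in `u ∘ ψ = ψ ∘ u` gives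
`u_{d q^r} t^{d q^r} + u_d = t u_{d q^r} + u_d ^ (q ^ r)`. At the top degree `d` of `u` this says
`u_d = u_d ^ (q ^ r)`, impossible for a nonzero nilpotent; hence `u = c X`, and then `c = c ^ (q ^ r)`.

The roots of `c ^ N = 1` (`N = q ^ r - 1`, prime to `p`) in `W ⧸ (μ ^ n)` correspond bijectively
to those in the algebraically closed residue field: an element `≡ 1` modulo the nilpotent kernel
has `p`-power order, which makes lifts unique, and `a ^ ((p ^ m) ^ φ N)` is a lift of the residue
of `a` for `m` large.
-/

open Polynomial

theorem IsNilpotent.eq_zero_of_pow_eq_self {R : Type*} [CommRing R] {a : R} (ha : IsNilpotent a)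
    {s : ℕ} (hs : 1 < s) (h : a ^ s = a) : a = 0 := by
  have hunit : IsUnit (1 - a ^ (s - 1)) := (ha.pow_of_pos (by omega)).isUnit_one_sub
  refine hunit.mul_left_eq_zero.mp ?_
  rw [mul_sub, mul_one, ← pow_succ', Nat.sub_add_cancel hs.le, h, sub_self]

theorem coeff_pow_expChar_pow_mul {R : Type*} [CommSemiring R] (p : ℕ) [ExpChar R p]
    (f : R[X]) (k m : ℕ) : (f ^ p ^ k).coeff (m * p ^ k) = f.coeff m ^ p ^ k := by
  rw [← map_iterateFrobenius_expand, coeff_map,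
    coeff_expand_mul (pow_pos (expChar_pos R p) k), iterateFrobenius_def]

theorem isNilpotent_coeff_of_comp_eq_X {R k : Type*} [CommRing R] [CommRing k] [IsDomain k]
    (π : R →+* k) (hπ : ∀ x, π x = 0 → IsNilpotent x) {u v : R[X]} (huv : u.comp v = X)
    {d : ℕ} (hd : 1 < d) : IsNilpotent (u.coeff d) := by
  have hdeg : (u.map π).natDegree * (v.map π).natDegree = 1 := by
    rw [← natDegree_comp, ← Polynomial.map_comp, huv, Polynomial.map_X, natDegree_X]
  refine hπ _ ?_
  rw [← coeff_map]
  exact coeff_eq_zero_of_natDegree_lt (by rwa [Nat.eq_one_of_mul_eq_one_right hdeg])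

namespace IsqPoly

variable {R : Type*}

theorem of_pow [Semiring R] {q : ℕ} {f : R[X]} (e : ℕ) (hf : IsqPoly (q ^ e) f) :
    IsqPoly q f := fun n hn ↦
  let ⟨i, hi⟩ := hf n hn
  ⟨e * i, by rw [hi, pow_mul]⟩

theorem C_mul_X [Semiring R] (q : ℕ) (c : R) : IsqPoly q (C c * X) := by
  intro n hn
  refine ⟨0, ?_⟩
  by_contra h
  simp_all [coeff_X]

theorem eq_C_mul_X_of_natDegree_le_one [Semiring R] {q : ℕ} (hq : q ≠ 0) {u : R[X]}
    (hu : IsqPoly q u) (hdeg : u.natDegree ≤ 1) : u = C (u.coeff 1) * X := by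
  have hu0 : u.coeff 0 = 0 := by
    by_contra h
    obtain ⟨i, hi⟩ := hu 0 (mem_support_iff.mpr h)
    exact pow_ne_zero i hq hi.symm
  ext d
  rcases d with _ | _ | d
  · simp [hu0]
  · simp
  · simp [coeff_eq_zero_of_natDegree_lt (show u.natDegree < d + 2 by omega)]

section ExpChar

variable {p : ℕ}

theorem comp_add [CommSemiring R] [ExpChar R p] {u : R[X]} (hu : IsqPoly p u) (f g : R[X]) :
    u.comp (f + g) = u.comp f + u.comp g := by
  simp only [comp_eq_sum_left, Polynomial.sum_def, ← Finset.sum_add_distrib, ← mul_add]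
  refine Finset.sum_congr rfl fun m hm ↦ ?_
  obtain ⟨i, rfl⟩ := hu m hm
  rw [add_pow_expChar_pow]

theorem coeff_relation_of_comp_comm [CommSemiring R] [ExpChar R p] {u : R[X]} (hu : IsqPoly p u)
    {T : R} {k : ℕ} (hcomm : u.comp (C T * X + X ^ p ^ k) = (C T * X + X ^ p ^ k).comp u)
    (d : ℕ) :
    u.coeff (d * p ^ k) * T ^ (d * p ^ k) + u.coeff d
      = T * u.coeff (d * p ^ k) + u.coeff d ^ p ^ k := by
  have h := congrArg (coeff · (d * p ^ k)) hcomm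
  simpa only [hu.comp_add, ← expand_eq_comp_X_pow, coeff_add, comp_C_mul_X_coeff,
    coeff_expand_mul (pow_pos (expChar_pos R p) k), add_comp, mul_comp, C_comp, X_comp,
    pow_comp, coeff_C_mul, coeff_pow_expChar_pow_mul] using h

theorem natDegree_le_one_of_comp_comm [CommRing R] [ExpChar R p] {u : R[X]} (hu : IsqPoly p u)
    {T : R} {k : ℕ} (hk : 1 < p ^ k)
    (hcomm : u.comp (C T * X + X ^ p ^ k) = (C T * X + X ^ p ^ k).comp u)
    (hnil : ∀ d, 1 < d → IsNilpotent (u.coeff d)) : u.natDegree ≤ 1 := by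
  by_contra! hd
  have htop : u.coeff (u.natDegree * p ^ k) = 0 :=
    coeff_eq_zero_of_natDegree_lt (lt_mul_right (by omega) hk)
  have hrel := hu.coeff_relation_of_comp_comm hcomm u.natDegree
  rw [htop, zero_mul, mul_zero, zero_add, zero_add] at hrel
  have : u.leadingCoeff = 0 := (hnil _ hd).eq_zero_of_pow_eq_self hk hrel.symm
  exact ne_zero_of_natDegree_gt hd (leadingCoeff_eq_zero.mp this)

end ExpChar

end IsqPoly

theorem C_mul_X_mem_isoSet {R : Type*} [CommRing R] (q s : ℕ) {T c : R} (hc : IsUnit c)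
    (hcs : c ^ s = c) : C c * X ∈ IsoSet q (C T * X + X ^ s) (C T * X + X ^ s) := by
  refine ⟨IsqPoly.C_mul_X q c, ⟨C ↑hc.unit⁻¹ * X, IsqPoly.C_mul_X q _, ?_, ?_⟩, ?_⟩
  · simp [mul_comp, ← mul_assoc, ← C_mul]
  · simp [mul_comp, ← mul_assoc, ← C_mul]
  · simp only [mul_comp, add_comp, C_comp, X_comp, pow_comp, mul_pow, ← C_pow, hcs]
    ring

section NilKernel

variable {R k : Type*} [CommRing R] [CommRing k] [IsDomain k] (π : R →+* k)
  (hπ : ∀ x, π x = 0 → IsNilpotent x)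
include hπ

theorem exists_eq_C_mul_X_of_mem_isoSet {p : ℕ} [ExpChar R p] {e s : ℕ} (hs : 1 < p ^ s)
    {T : R} {u : R[X]} (hu : u ∈ IsoSet (p ^ e) (C T * X + X ^ p ^ s) (C T * X + X ^ p ^ s)) :
    ∃ c, c ^ (p ^ s - 1) = 1 ∧ u = C c * X := by
  obtain ⟨hq, ⟨v, -, huv, -⟩, hcomm⟩ := hu
  have hp : IsqPoly p u := hq.of_pow e
  have hdeg := hp.natDegree_le_one_of_comp_comm hs hcomm
    fun d hd ↦ isNilpotent_coeff_of_comp_eq_X π hπ huv hd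
  have hlin := hp.eq_C_mul_X_of_natDegree_le_one (expChar_pos R p).ne' hdeg
  have hunit : IsUnit (u.coeff 1) := by
    rw [hlin, mul_comp, C_comp, X_comp] at huv
    exact IsUnit.of_mul_eq_one (v.coeff 1) (by simpa using congrArg (coeff · 1) huv)
  have hrel := hp.coeff_relation_of_comp_comm hcomm 1
  rw [one_mul, coeff_eq_zero_of_natDegree_lt (by omega), zero_mul, mul_zero, zero_add,
    zero_add] at hrel
  refine ⟨u.coeff 1, hunit.mul_left_cancel ?_, hlin⟩
  rw [← pow_succ', Nat.sub_add_cancel hs.le, mul_one, ← hrel]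

theorem isoSet_C_mul_X_add_X_pow {p : ℕ} [ExpChar R p] (e : ℕ) {s : ℕ} (hs : 1 < p ^ s)
    (T : R) : IsoSet (p ^ e) (C T * X + X ^ p ^ s) (C T * X + X ^ p ^ s)
      = {u | ∃ c, c ^ (p ^ s - 1) = 1 ∧ u = C c * X} := by
  ext u
  refine ⟨exists_eq_C_mul_X_of_mem_isoSet π hπ hs, ?_⟩
  rintro ⟨c, hc, rfl⟩
  refine C_mul_X_mem_isoSet _ _ (IsUnit.of_pow_eq_one hc (by omega)) ?_
  rw [← Nat.sub_add_cancel hs.le, pow_succ, hc, one_mul]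

end NilKernel

theorem encard_setOf_eq_C_mul_X {R : Type*} [Semiring R] (P : R → Prop) :
    {u : R[X] | ∃ c, P c ∧ u = C c * X}.encard = {c | P c}.encard := by
  have himage : {u : R[X] | ∃ c, P c ∧ u = C c * X} = (fun c ↦ C c * X) '' {c | P c} := by
    ext u
    simp [eq_comm]
  rw [himage, Function.Injective.encard_image]
  intro a b h
  simpa using congrArg (coeff · 1) h

theorem ne_zero_of_coprime_prime {N p : ℕ} (hp : p.Prime) (hN : N.Coprime p) : N ≠ 0 := by
  rintro rfl
  exact hp.one_lt.ne' (Nat.coprime_zero_left p |>.mp hN)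

section CharP

variable {R : Type*} [CommRing R] (p : ℕ) [Fact p.Prime] [CharP R p]

theorem exists_pow_char_pow_eq_one {x : R} (h : IsNilpotent (x - 1)) : ∃ m, x ^ p ^ m = 1 := by
  obtain ⟨m, hm⟩ := h
  refine ⟨m, ?_⟩
  have : (x - 1) ^ p ^ m = 0 := pow_eq_zero_of_le (Nat.lt_pow_self (Fact.out : p.Prime).one_lt).le hm
  rwa [sub_pow_char_pow, one_pow, sub_eq_zero] at this

theorem eq_one_of_pow_eq_one_of_isNilpotent_sub_one {N : ℕ} (hN : N.Coprime p) {x : R}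
    (hx : x ^ N = 1) (h : IsNilpotent (x - 1)) : x = 1 := by
  obtain ⟨m, hm⟩ := exists_pow_char_pow_eq_one p h
  simpa [(hN.pow_right m).gcd_eq_one] using pow_gcd_eq_one.mpr ⟨hx, hm⟩

variable {k : Type*} [CommRing k] (π : R →+* k) (hπ : ∀ x, π x = 0 → IsNilpotent x)
include hπ

theorem injOn_pow_eq_one {N : ℕ} (hN : N.Coprime p) : Set.InjOn π {c | c ^ N = 1} := by
  intro c (hc : c ^ N = 1) c' (hc' : c' ^ N = 1) h
  have hN0 : N ≠ 0 := ne_zero_of_coprime_prime Fact.out hN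
  have hcN : c ^ (N - 1) * c = 1 := by rw [← pow_succ, Nat.sub_add_cancel (by omega), hc]
  have hw : c' * c ^ (N - 1) = 1 := by
    refine eq_one_of_pow_eq_one_of_isNilpotent_sub_one p hN ?_ (hπ _ ?_)
    · rw [mul_pow, hc', ← pow_mul, mul_comm (N - 1) N, pow_mul, hc, one_pow, one_mul]
    · rw [map_sub, map_mul, map_pow, ← h, ← map_pow, ← map_mul, mul_comm, hcN, map_one, sub_self]
  calc c = c' * c ^ (N - 1) * c := by rw [hw, one_mul]
    _ = c' := by rw [mul_assoc, hcN, mul_one]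

theorem surjOn_pow_eq_one (hπs : Function.Surjective π) {N : ℕ} (hN : N.Coprime p) :
    Set.SurjOn π {c | c ^ N = 1} {ζ | ζ ^ N = 1} := by
  intro ζ (hζ : ζ ^ N = 1)
  obtain ⟨a, rfl⟩ := hπs ζ
  obtain ⟨m, hm⟩ := exists_pow_char_pow_eq_one p (x := a ^ N) (hπ _ (by simp [hζ]))
  have hN0 : N ≠ 0 := ne_zero_of_coprime_prime Fact.out hN
  -- The exponent is divisible by `p ^ m`, which kills the unipotent part of `a ^ N`, and is
  -- `≡ 1 mod N` by Euler, so the residue is unchanged.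
  refine ⟨a ^ (p ^ m) ^ N.totient, ?_, ?_⟩
  · obtain ⟨j, hj⟩ : p ^ m ∣ (p ^ m) ^ N.totient :=
      dvd_pow_self _ (Nat.totient_pos.mpr (by omega)).ne'
    show (a ^ (p ^ m) ^ N.totient) ^ N = 1
    rw [← pow_mul, mul_comm, pow_mul, hj, pow_mul, hm, one_pow]
  · rw [map_pow, pow_eq_pow_of_modEq (Nat.ModEq.pow_totient (hN.symm.pow_left m)) hζ, pow_one]

end CharP

theorem encard_pow_eq_one {R k : Type*} [CommRing R] [Field k] [IsSepClosed k] (p : ℕ)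
    [Fact p.Prime] [CharP R p] (π : R →+* k) (hπ : ∀ x, π x = 0 → IsNilpotent x)
    (hπs : Function.Surjective π) {N : ℕ} (hN : (N : k) ≠ 0) :
    {c : R | c ^ N = 1}.encard = N := by
  have hcop : N.Coprime p := by
    refine Nat.coprime_comm.mp ((Nat.Prime.coprime_iff_not_dvd Fact.out).mpr fun hdvd ↦ hN ?_)
    rw [← map_natCast π, (CharP.cast_eq_zero_iff R p N).mpr hdvd, map_zero]
  have : NeZero (N : k) := ⟨hN⟩
  obtain ⟨ζ, hζ⟩ := HasEnoughRootsOfUnity.exists_primitiveRoot k N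
  have hroots : {z : k | z ^ N = 1} = ↑(nthRootsFinset N (1 : k)) := by
    ext z
    simp [mem_nthRootsFinset (Nat.pos_of_ne_zero (NeZero.of_neZero_natCast k).out)]
  have hmaps : Set.MapsTo π {c | c ^ N = 1} {z | z ^ N = 1} := fun c (hc : c ^ N = 1) ↦ by
    simp [← map_pow, hc]
  rw [← (injOn_pow_eq_one p π hπ hcop).encard_image,
    (surjOn_pow_eq_one p π hπ hπs hcop).image_eq_of_mapsTo hmaps, hroots,
    Set.encard_coe_eq_coe_finsetCard, hζ.card_nthRootsFinset]

theorem Ideal.Quotient.isNilpotent_of_factor_eq_zero {R : Type*} [CommRing R] {I J : Ideal R}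
    (h : I ≤ J) {n : ℕ} (hJ : J ^ n ≤ I) (x : R ⧸ I) (hx : Ideal.Quotient.factor h x = 0) :
    IsNilpotent x := by
  obtain ⟨w, rfl⟩ := Ideal.Quotient.mk_surjective x
  rw [Ideal.Quotient.factor_mk, Ideal.Quotient.eq_zero_iff_mem] at hx
  exact ⟨n, by rw [← map_pow, Ideal.Quotient.eq_zero_iff_mem]; exact hJ (Ideal.pow_mem_pow hx n)⟩

open Polynomial in
theorem stmt7_general (p : ℕ) (hp : p.Prime) (e : ℕ) (he : 0 < e) (q : ℕ) (hq : q = p ^ e)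
    (W : Type*) [CommRing W] [IsDomain W] [IsDiscreteValuationRing W] [CharP W p]
    [IsAlgClosed (IsLocalRing.ResidueField W)]
    (μ : W) (hμ : Irreducible μ)
    (r n : ℕ) (hr : 1 ≤ r) (hn : 1 ≤ n) (t : W)
    (ψbar : Polynomial (W ⧸ Ideal.span {μ ^ n}))
    (hψ : ψbar = C (Ideal.Quotient.mk (Ideal.span {μ ^ n}) t) * X + X ^ q ^ r) :
    IsoSet q ψbar ψbar
        = {u : Polynomial (W ⧸ Ideal.span {μ ^ n}) |
            ∃ c : W ⧸ Ideal.span {μ ^ n}, c ^ (q ^ r - 1) = 1 ∧ u = C c * X} ∧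
      (IsoSet q ψbar ψbar).encard = ((q ^ r - 1 : ℕ) : ℕ∞) := by
  subst hq hψ
  have : Fact p.Prime := ⟨hp⟩
  have hI : Ideal.span {μ ^ n} = IsLocalRing.maximalIdeal W ^ n := by
    rw [hμ.maximalIdeal_eq, Ideal.span_singleton_pow]
  have hle : Ideal.span {μ ^ n} ≤ IsLocalRing.maximalIdeal W := hI ▸ Ideal.pow_le_self (by omega)
  have : Nontrivial (W ⧸ Ideal.span {μ ^ n}) := Ideal.Quotient.nontrivial_iff.mpr
    (ne_top_of_le_ne_top (IsLocalRing.maximalIdeal.isMaximal W).ne_top hle)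
  have : CharP (W ⧸ Ideal.span {μ ^ n}) p :=
    CharP.of_ringHom_of_ne_zero (Ideal.Quotient.mk _) p hp.ne_zero
  let π : W ⧸ Ideal.span {μ ^ n} →+* IsLocalRing.ResidueField W := Ideal.Quotient.factor hle
  have hπ : ∀ x, π x = 0 → IsNilpotent x := Ideal.Quotient.isNilpotent_of_factor_eq_zero hle hI.ge
  have hs : 1 < p ^ (e * r) := Nat.one_lt_pow (by positivity) hp.one_lt
  have hN : ((p ^ (e * r) - 1 : ℕ) : IsLocalRing.ResidueField W) ≠ 0 := by
    have hp0 : (p : IsLocalRing.ResidueField W) = 0 := by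
      rw [← map_natCast π, CharP.cast_eq_zero, map_zero]
    rw [Nat.cast_sub hs.le, Nat.cast_pow, hp0, zero_pow (by positivity)]
    simp
  rw [← pow_mul, isoSet_C_mul_X_add_X_pow π hπ e hs]
  exact ⟨rfl, by rw [encard_setOf_eq_C_mul_X,
    encard_pow_eq_one p π hπ (Ideal.Quotient.factor_surjective hle) hN]⟩

open Polynomial in
/-- The automorphism group of the Drinfeld module `φ_T = T + τ^r` over `W/μ^n W` consists
exactly of the linear polynomials `cX` with `c^(q^r-1) = 1`, and has `q^r - 1` elements. -/
theorem stmt7 (p : ℕ) (hp : p.Prime) (e : ℕ) (he : 0 < e) (q : ℕ) (hq : q = p ^ e)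
    (W : Type*) [CommRing W] [IsDomain W] [IsDiscreteValuationRing W] [CharP W p]
    [IsAdicComplete (IsLocalRing.maximalIdeal W) W]
    [IsAlgClosed (IsLocalRing.ResidueField W)]
    (μ : W) (hμ : Irreducible μ)
    (r n : ℕ) (hr : 1 ≤ r) (hn : 1 ≤ n) (t : W)
    (ψbar : Polynomial (W ⧸ Ideal.span {μ ^ n}))
    (hψ : ψbar = C (Ideal.Quotient.mk (Ideal.span {μ ^ n}) t) * X + X ^ q ^ r) :
    IsoSet q ψbar ψbar
        = {u : Polynomial (W ⧸ Ideal.span {μ ^ n}) |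
            ∃ c : W ⧸ Ideal.span {μ ^ n}, c ^ (q ^ r - 1) = 1 ∧ u = C c * X} ∧
      (IsoSet q ψbar ψbar).encard = ((q ^ r - 1 : ℕ) : ℕ∞) :=
  stmt7_general p hp e he q hq W μ hμ r n hr hn t ψbar hψ
end

section
/- Let q be a prime power, F = 𝔽_q(T), H = 𝔽_{q³}(T), σ the q-Frobenius automorphism of H over F, π ∈ 𝔽_q[T], and x_1, x_2, x_3 ∈ H. Then the characteristic polynomial of the matrix M = [[x_1, x_2, x_3], [πσ(x_3), σ(x_1), σ(x_2)], [πσ²(x_2), πσ²(x_3), σ²(x_1)]] equals X³ − Tr(x_1)·X² + (Tr(x_1σ(x_1)) − π·Tr(x_2σ(x_3)))·X − (N(x_1) + π·N(x_2) + π²·N(x_3) − π·Tr(x_1σ(x_2)σ²(x_3))). -/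
open Polynomial in
theorem sigma3_id_aux (Fqr : Type) [Field Fqr] [Fintype Fqr] (q : ℕ) (hcqr : Fintype.card Fqr = q ^ 3)
    (σ : RatFunc Fqr →+* RatFunc Fqr)
    (hσC : ∀ a : Fqr, σ (RatFunc.C a) = RatFunc.C (a ^ q))
    (hσX : σ RatFunc.X = RatFunc.X) (y : RatFunc Fqr) : σ (σ (σ y)) = y := by
  have key : ∀ pp : Polynomial Fqr, σ (σ (σ (algebraMap _ (RatFunc Fqr) pp))) = algebraMap _ _ pp := by
    intro pp
    have : (σ.comp (σ.comp σ)).comp (algebraMap (Polynomial Fqr) (RatFunc Fqr) : Polynomial Fqr →+* RatFunc Fqr)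
        = (algebraMap (Polynomial Fqr) (RatFunc Fqr) : Polynomial Fqr →+* RatFunc Fqr) := by
      apply Polynomial.ringHom_ext
      · intro a
        simp only [RingHom.comp_apply, RatFunc.algebraMap_C, hσC, ← map_pow, ← pow_mul]
        rw [show q * q * q = Fintype.card Fqr by rw [hcqr]; ring, FiniteField.pow_card]
      · simp [RatFunc.algebraMap_X, hσX]
    exact DFunLike.congr_fun this pp
  conv_lhs => rw [← RatFunc.num_div_denom y]
  rw [map_div₀, map_div₀, map_div₀, key, key, RatFunc.num_div_denom]

theorem sigma_pi_aux (Fq Fqr : Type) [Field Fq] [Field Fqr] [Fintype Fq] [Algebra Fq Fqr] (q : ℕ)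
    (hcq : Fintype.card Fq = q)
    (σ : RatFunc Fqr →+* RatFunc Fqr)
    (hσC : ∀ a : Fqr, σ (RatFunc.C a) = RatFunc.C (a ^ q))
    (hσX : σ RatFunc.X = RatFunc.X) (π₀ : Polynomial Fq) :
    σ (algebraMap (Polynomial Fqr) (RatFunc Fqr) (π₀.map (algebraMap Fq Fqr)))
      = algebraMap (Polynomial Fqr) (RatFunc Fqr) (π₀.map (algebraMap Fq Fqr)) := by
  have : (σ.comp ((algebraMap (Polynomial Fqr) (RatFunc Fqr) : Polynomial Fqr →+* RatFunc Fqr).comp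
      (Polynomial.mapRingHom (algebraMap Fq Fqr))))
      = (algebraMap (Polynomial Fqr) (RatFunc Fqr) : Polynomial Fqr →+* RatFunc Fqr).comp
        (Polynomial.mapRingHom (algebraMap Fq Fqr)) := by
    apply Polynomial.ringHom_ext
    · intro a
      simp only [RingHom.comp_apply, Polynomial.coe_mapRingHom, Polynomial.map_C,
        RatFunc.algebraMap_C, hσC, ← map_pow]
      rw [← hcq, FiniteField.pow_card]
    · simp [RatFunc.algebraMap_X, hσX]
  exact DFunLike.congr_fun this π₀


/-- `Tr(y) = y + σ(y) + σ²(y)`. -/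
def tr3 {H : Type*} [CommRing H] (σ : H →+* H) (y : H) : H := y + σ y + σ (σ y)

/-- `N(y) = y·σ(y)·σ²(y)`. -/
def norm3 {H : Type*} [CommRing H] (σ : H →+* H) (y : H) : H := y * σ y * σ (σ y)

open Polynomial in
set_option maxHeartbeats 1600000 in
/-- The characteristic polynomial of the twisted matrix `M_{(x₁,x₂,x₃)}` over
`H = 𝔽_{q³}(T)`, with `σ` the `q`-Frobenius of `H` over `F = 𝔽_q(T)` and `π ∈ 𝔽_q[T]`:
the source of equations (7), (8), (9) in Section 5 of the paper. -/
theorem stmt11 (p : ℕ) (hp : p.Prime) (e : ℕ) (he : 0 < e) (q : ℕ) (hq : q = p ^ e)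
    (Fq Fqr : Type) [Field Fq] [Field Fqr] [Fintype Fq] [Fintype Fqr] [Algebra Fq Fqr]
    (hcq : Fintype.card Fq = q) (hcqr : Fintype.card Fqr = q ^ 3)
    (σ : RatFunc Fqr →+* RatFunc Fqr)
    (hσC : ∀ a : Fqr, σ (RatFunc.C a) = RatFunc.C (a ^ q))
    (hσX : σ RatFunc.X = RatFunc.X)
    (π₀ : Polynomial Fq) (π : RatFunc Fqr)
    (hπ : π = algebraMap (Polynomial Fqr) (RatFunc Fqr) (π₀.map (algebraMap Fq Fqr)))
    (x₁ x₂ x₃ : RatFunc Fqr) :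
    (!![x₁, x₂, x₃;
        π * σ x₃, σ x₁, σ x₂;
        π * σ (σ x₂), π * σ (σ x₃), σ (σ x₁)] :
          Matrix (Fin 3) (Fin 3) (RatFunc Fqr)).charpoly
      = X ^ 3 - C (tr3 σ x₁) * X ^ 2
        + C (tr3 σ (x₁ * σ x₁) - π * tr3 σ (x₂ * σ x₃)) * X
        - C (norm3 σ x₁ + π * norm3 σ x₂ + π ^ 2 * norm3 σ x₃
              - π * tr3 σ (x₁ * σ x₂ * σ (σ x₃))) := by
  have hσπ : σ π = π := by rw [hπ]; exact sigma_pi_aux Fq Fqr q hcq σ hσC hσX π₀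
  have h₁ := sigma3_id_aux Fqr q hcqr σ hσC hσX x₁
  have h₂ := sigma3_id_aux Fqr q hcqr σ hσC hσX x₂
  have h₃ := sigma3_id_aux Fqr q hcqr σ hσC hσX x₃
  unfold tr3 norm3
  rw [Matrix.charpoly, Matrix.det_fin_three]
  simp only [Matrix.charmatrix_apply, Matrix.one_apply, Matrix.of_apply, Matrix.cons_val',
    Matrix.cons_val_zero, Matrix.cons_val_one, Matrix.head_cons, Matrix.cons_val_two,
    Matrix.tail_cons, Matrix.head_fin_const, Matrix.empty_val', Matrix.cons_val_fin_one,
    Fin.isValue, Matrix.map_apply, Matrix.diagonal_apply, map_mul, hσπ, h₁, h₂, h₃,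
    show ((0:Fin 3) = 1) = False from by decide, show ((0:Fin 3) = 2) = False from by decide,
    show ((1:Fin 3) = 0) = False from by decide, show ((1:Fin 3) = 2) = False from by decide,
    show ((2:Fin 3) = 0) = False from by decide, show ((2:Fin 3) = 1) = False from by decide,
    if_false, if_true, eq_self_iff_true]
  simp only [map_mul, map_add, map_sub, map_pow, map_one]
  ring
end

section
/- Let q be a prime power, H = 𝔽_{q³}(T), σ the q-Frobenius automorphism of H over F = 𝔽_q(T), and take π = T. For every β ∈ 𝔽_{q³} with β^{1+q+q²} = 1, the matrix M_{(0,β,0)} = [[0, β, 0], [0, 0, σ(β)], [Tσ²(β), 0, 0]] satisfies M_{(0,β,0)}³ = T·I₃. Consequently the set {(x_1,x_2,x_3) ∈ 𝔽_{q³}[T]³ : M_{(x_1,x_2,x_3)}³ = T·I₃} has at least q² + q + 1 elements. -/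
/-!
`M_{(0,β,0)}` is a monomial matrix whose cube is the scalar `π · β σ(β) σ²(β)`, so it is a cube
root of `π` as soon as `β` has norm `1`. For `σ` the `q`-Frobenius of `𝔽_{q³}`, the elements of
norm `1` are the `(q² + q + 1)`-th roots of unity, and there are exactly `q² + q + 1` of them
because `q² + q + 1` divides the order `q³ - 1` of the cyclic group `𝔽_{q³}ˣ`.
-/

/-- The twisted matrix `M_{(x₁,x₂,x₃)}` of the paper (rank `3`), over a commutative ring
with a ring endomorphism `σ` and parameter `π`. -/
noncomputable def M3 {R : Type*} [CommRing R] (σ : R →+* R) (π x₁ x₂ x₃ : R) :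
    Matrix (Fin 3) (Fin 3) R :=
  !![x₁, x₂, x₃;
     π * σ x₃, σ x₁, σ x₂;
     π * σ (σ x₂), π * σ (σ x₃), σ (σ x₁)]

theorem M3_zero_zero_pow_three {R : Type*} [CommRing R] (σ : R →+* R) (π b : R) :
    M3 σ π 0 b 0 ^ 3 = (π * (b * σ b * σ (σ b))) • (1 : Matrix (Fin 3) (Fin 3) R) := by
  rw [M3, pow_succ, pow_two, Matrix.mul_fin_three, Matrix.mul_fin_three]
  ext i j
  fin_cases i <;> fin_cases j <;> simp <;> ring

theorem IsCyclic.exists_orderOf_eq_of_dvd {G : Type*} [Group G] [Finite G] [IsCyclic G] {n : ℕ}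
    (hn : n ∣ Nat.card G) : ∃ g : G, orderOf g = n := by
  obtain ⟨g, hg⟩ := IsCyclic.exists_ofOrder_eq_natCard (α := G)
  exact ⟨g ^ (orderOf g / n), orderOf_pow_orderOf_div (hg ▸ Nat.card_pos.ne') (hg ▸ hn)⟩

theorem FiniteField.exists_isPrimitiveRoot_of_dvd {K : Type*} [Field K] [Fintype K] {n : ℕ}
    (hn : n ∣ Fintype.card K - 1) : ∃ ζ : K, IsPrimitiveRoot ζ n := by
  classical
  rw [← Fintype.card_units, ← Nat.card_eq_fintype_card] at hn
  obtain ⟨ζ, hζ⟩ := IsCyclic.exists_orderOf_eq_of_dvd hn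
  exact ⟨ζ, IsPrimitiveRoot.coe_units_iff.mpr (hζ ▸ IsPrimitiveRoot.orderOf ζ)⟩

theorem Nat.cube_sub_one_eq_mul (q : ℕ) : q ^ 3 - 1 = (q - 1) * (1 + q + q ^ 2) := by
  cases q with
  | zero => rfl
  | succ q => simp only [Nat.add_sub_cancel]; ring_nf; omega

open Polynomial in
theorem stmt14_general (q : ℕ)
    (Fqr : Type) [Field Fqr] [Fintype Fqr] (hcard : Fintype.card Fqr = q ^ 3)
    (σ₀ : Fqr →+* Fqr) (hσ₀ : ∀ a : Fqr, σ₀ a = a ^ q) :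
    (∀ β : Fqr, β ^ (1 + q + q ^ 2) = 1 →
        (M3 (Polynomial.mapRingHom σ₀) (X : Polynomial Fqr) 0 (C β) 0) ^ 3
          = (X : Polynomial Fqr) • (1 : Matrix (Fin 3) (Fin 3) (Polynomial Fqr))) ∧
      ((q ^ 2 + q + 1 : ℕ) : ℕ∞) ≤
        {x : Polynomial Fqr × Polynomial Fqr × Polynomial Fqr |
          (M3 (Polynomial.mapRingHom σ₀) (X : Polynomial Fqr) x.1 x.2.1 x.2.2) ^ 3
            = (X : Polynomial Fqr) • (1 : Matrix (Fin 3) (Fin 3) (Polynomial Fqr))}.encard := by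
  have cube_root : ∀ β : Fqr, β ^ (1 + q + q ^ 2) = 1 →
      (M3 (Polynomial.mapRingHom σ₀) X 0 (C β) 0) ^ 3 = (X : Fqr[X]) • (1 : Matrix _ _ _) := by
    intro β hβ
    have norm_eq : β * σ₀ β * σ₀ (σ₀ β) = β ^ (1 + q + q ^ 2) := by
      rw [hσ₀, hσ₀, ← pow_mul, ← pow_succ', ← pow_add]; ring_nf
    rw [M3_zero_zero_pow_three]
    simp only [coe_mapRingHom, map_C, ← C_mul, norm_eq, hβ, map_one, mul_one]
  refine ⟨cube_root, ?_⟩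
  obtain ⟨ζ, hζ⟩ := FiniteField.exists_isPrimitiveRoot_of_dvd (K := Fqr) (n := 1 + q + q ^ 2)
    (hcard ▸ Nat.cube_sub_one_eq_mul q ▸ dvd_mul_left _ _)
  have hinj : Function.Injective fun β : Fqr => ((0 : Fqr[X]), C β, (0 : Fqr[X])) :=
    fun a b hab => C_injective (congrArg (·.2.1) hab)
  calc ((q ^ 2 + q + 1 : ℕ) : ℕ∞)
      = ((nthRootsFinset (1 + q + q ^ 2) (1 : Fqr) : Set Fqr)).encard := by
        rw [Set.encard_coe_eq_coe_finsetCard, hζ.card_nthRootsFinset]; ring_nf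
    _ = ((fun β : Fqr => ((0 : Fqr[X]), C β, (0 : Fqr[X]))) ''
          nthRootsFinset (1 + q + q ^ 2) (1 : Fqr)).encard := hinj.injOn.encard_image.symm
    _ ≤ _ := by
        refine Set.encard_le_encard ?_
        rintro _ ⟨β, hβ, rfl⟩
        exact cube_root β ((mem_nthRootsFinset (by positivity) 1).mp hβ)

open Polynomial in
/-- Section 5.1: for `β ∈ 𝔽_{q³}` of norm `1`, the matrix `M_{(0,β,0)}` (with `π = T` and
`σ` the coefficientwise `q`-Frobenius of `𝔽_{q³}[T]`) satisfies `M³ = T·I₃`; hence the set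
of triples `(x₁,x₂,x₃) ∈ 𝔽_{q³}[T]³` with `M_{(x₁,x₂,x₃)}³ = T·I₃` has at least
`q² + q + 1` elements. -/
theorem stmt14 (p : ℕ) (hp : p.Prime) (e : ℕ) (he : 0 < e) (q : ℕ) (hq : q = p ^ e)
    (Fqr : Type) [Field Fqr] [Fintype Fqr] (hcard : Fintype.card Fqr = q ^ 3)
    (σ₀ : Fqr →+* Fqr) (hσ₀ : ∀ a : Fqr, σ₀ a = a ^ q) :
    (∀ β : Fqr, β ^ (1 + q + q ^ 2) = 1 →
        (M3 (Polynomial.mapRingHom σ₀) (X : Polynomial Fqr) 0 (C β) 0) ^ 3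
          = (X : Polynomial Fqr) • (1 : Matrix (Fin 3) (Fin 3) (Polynomial Fqr))) ∧
      ((q ^ 2 + q + 1 : ℕ) : ℕ∞) ≤
        {x : Polynomial Fqr × Polynomial Fqr × Polynomial Fqr |
          (M3 (Polynomial.mapRingHom σ₀) (X : Polynomial Fqr) x.1 x.2.1 x.2.2) ^ 3
            = (X : Polynomial Fqr) • (1 : Matrix (Fin 3) (Fin 3) (Polynomial Fqr))}.encard :=
  stmt14_general q Fqr hcard σ₀ hσ₀
end

section
/- Let q be a prime power, H = 𝔽_{q³}(T), σ the q-Frobenius automorphism of H over F = 𝔽_q(T), and take π = T. There is no triple (x_1, x_2, x_3) ∈ 𝔽_{q³}[T]³ with T ∣ x_2 and T ∣ x_3 such that M_{(x_1,x_2,x_3)}³ = T·I₃. -/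
namespace M3

variable {R : Type*} [CommRing R] (σ : R →+* R)

/-- The norm `N(x) = x σ(x) σ²(x)` of the paper. -/
def twistNorm (x : R) : R := x * σ x * σ (σ x)

theorem twistNorm_mul (x y : R) : twistNorm σ (x * y) = twistNorm σ x * twistNorm σ y := by
  simp only [twistNorm, map_mul]
  ring

theorem twistNorm_of_fixed {π : R} (hπ : σ π = π) : twistNorm σ π = π ^ 3 := by
  simp only [twistNorm, hπ]
  ring

theorem det_eq (π x₁ x₂ x₃ : R) :
    (M3 σ π x₁ x₂ x₃).det = twistNorm σ x₁ + π * twistNorm σ x₂ + π ^ 2 * twistNorm σ x₃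
      - π * (x₁ * σ x₂ * σ (σ x₃) + x₂ * σ x₃ * σ (σ x₁) + x₃ * σ x₁ * σ (σ x₂)) := by
  simp [M3, Matrix.det_fin_three, twistNorm]
  ring

theorem pow_three_dvd_det_sub_twistNorm {π x₂ x₃ : R} (hπ : σ π = π) (hx₂ : π ∣ x₂)
    (hx₃ : π ∣ x₃) (x₁ : R) : π ^ 3 ∣ (M3 σ π x₁ x₂ x₃).det - twistNorm σ x₁ := by
  obtain ⟨b, rfl⟩ := hx₂
  obtain ⟨c, rfl⟩ := hx₃
  refine ⟨π * twistNorm σ b + π ^ 2 * twistNorm σ c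
    - (x₁ * σ b * σ (σ c) + b * σ c * σ (σ x₁) + c * σ x₁ * σ (σ b)), ?_⟩
  rw [det_eq, twistNorm_mul, twistNorm_mul, twistNorm_of_fixed σ hπ]
  simp only [map_mul, hπ]
  ring

theorem dvd_of_dvd_twistNorm {π : R} (hprime : Prime π) (hσ : ∀ a, π ∣ σ a → π ∣ a) {x : R}
    (h : π ∣ twistNorm σ x) : π ∣ x := by
  rcases hprime.dvd_or_dvd h with h | h
  · rcases hprime.dvd_or_dvd h with h | h
    · exact h
    · exact hσ x h
  · exact hσ x (hσ (σ x) h)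

theorem pow_three_ne_smul_one [IsDomain R] {π x₁ x₂ x₃ : R} (hprime : Prime π)
    (hπ : σ π = π) (hσ : ∀ a, π ∣ σ a → π ∣ a) (hx₂ : π ∣ x₂) (hx₃ : π ∣ x₃) :
    M3 σ π x₁ x₂ x₃ ^ 3 ≠ π • (1 : Matrix (Fin 3) (Fin 3) R) := by
  intro hM
  have hdet : (M3 σ π x₁ x₂ x₃).det ^ 3 = π ^ 3 := by
    simpa [Matrix.det_pow, Matrix.det_smul] using congrArg Matrix.det hM
  have hcong := pow_three_dvd_det_sub_twistNorm σ hπ hx₂ hx₃ x₁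
  have hdvd_det : π ∣ (M3 σ π x₁ x₂ x₃).det :=
    hprime.dvd_of_dvd_pow (hdet ▸ dvd_pow_self π three_ne_zero)
  have hx₁ : π ∣ x₁ := dvd_of_dvd_twistNorm σ hprime hσ <|
    (dvd_sub_right hdvd_det).mp ((dvd_pow_self π three_ne_zero).trans hcong)
  have hnorm : π ^ 3 ∣ twistNorm σ x₁ := by
    obtain ⟨a, rfl⟩ := hx₁
    rw [twistNorm_mul, twistNorm_of_fixed σ hπ]
    exact dvd_mul_right _ _
  have h9 : π ^ 9 ∣ π ^ 3 := by
    rw [← hdet, show 9 = 3 * 3 from rfl, pow_mul]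
    exact pow_dvd_pow_of_dvd ((dvd_sub_left hnorm).mp hcong) 3
  exact absurd ((pow_dvd_pow_iff hprime.ne_zero hprime.not_isUnit).mp h9) (by norm_num)

end M3

theorem Polynomial.X_dvd_map_iff {R S : Type*} [Semiring R] [Semiring S] {f : R →+* S}
    (hf : Function.Injective f) {p : Polynomial R} : X ∣ p.map f ↔ X ∣ p := by
  rw [X_dvd_iff, X_dvd_iff, coeff_map, map_eq_zero_iff f hf]

open Polynomial in
theorem stmt15_general (Fqr : Type) [Field Fqr] (σ₀ : Fqr →+* Fqr) :
    ¬ ∃ x₁ x₂ x₃ : Polynomial Fqr, (X : Polynomial Fqr) ∣ x₂ ∧ (X : Polynomial Fqr) ∣ x₃ ∧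
      (M3 (Polynomial.mapRingHom σ₀) (X : Polynomial Fqr) x₁ x₂ x₃) ^ 3
        = (X : Polynomial Fqr) • (1 : Matrix (Fin 3) (Fin 3) (Polynomial Fqr)) := by
  rintro ⟨x₁, x₂, x₃, hx₂, hx₃, hM⟩
  exact M3.pow_three_ne_smul_one _ prime_X (map_X σ₀)
    (fun _ ↦ (X_dvd_map_iff σ₀.injective).mp) hx₂ hx₃ hM

open Polynomial in
/-- The degree-counting claim of Section 5.1: with `π = T` and `σ` the coefficientwise
`q`-Frobenius of `𝔽_{q³}[T]`, there is no triple `(x₁,x₂,x₃) ∈ 𝔽_{q³}[T]³` with `T ∣ x₂`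
and `T ∣ x₃` such that `M_{(x₁,x₂,x₃)}³ = T·I₃`. -/
theorem stmt15 (p : ℕ) (hp : p.Prime) (e : ℕ) (he : 0 < e) (q : ℕ) (hq : q = p ^ e)
    (Fqr : Type) [Field Fqr] [Fintype Fqr] (hcard : Fintype.card Fqr = q ^ 3)
    (σ₀ : Fqr →+* Fqr) (hσ₀ : ∀ a : Fqr, σ₀ a = a ^ q) :
    ¬ ∃ x₁ x₂ x₃ : Polynomial Fqr, (X : Polynomial Fqr) ∣ x₂ ∧ (X : Polynomial Fqr) ∣ x₃ ∧
      (M3 (Polynomial.mapRingHom σ₀) (X : Polynomial Fqr) x₁ x₂ x₃) ^ 3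
        = (X : Polynomial Fqr) • (1 : Matrix (Fin 3) (Fin 3) (Polynomial Fqr)) :=
  stmt15_general Fqr σ₀
end

section
/- Let q be a power of 3, H = 𝔽_{q³}(T), σ the q-Frobenius automorphism of H over F = 𝔽_q(T), and take π = T. Then the set {(x_1, x_2, x_3) ∈ 𝔽_{q³}[T]³ : M_{(x_1,x_2,x_3)}³ = T·I₃} has exactly q² + q + 1 elements. -/
open Polynomial

/-- The norm `N_{H/F}` of the paper when `σ` generates `Gal(H/F)`. -/
def cyclicNorm {R : Type*} [CommRing R] (σ : R →+* R) (x : R) : R := x * σ x * σ (σ x)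

section CommRing

variable {R : Type*} [CommRing R] (σ : R →+* R) (π : R)

theorem det_M3 (x₁ x₂ x₃ : R) :
    (M3 σ π x₁ x₂ x₃).det = cyclicNorm σ x₁ + π * cyclicNorm σ x₂ + π ^ 2 * cyclicNorm σ x₃
      - π * (x₁ * σ x₂ * σ (σ x₃) + σ x₁ * σ (σ x₂) * x₃ + σ (σ x₁) * x₂ * σ x₃) := by
  rw [M3, Matrix.det_fin_three]
  simp only [cyclicNorm, Matrix.of_apply, Matrix.cons_val', Matrix.cons_val_zero,
    Matrix.cons_val_one, Matrix.cons_val_two, Matrix.empty_val', Matrix.cons_val_fin_one,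
    Matrix.head_cons, Matrix.tail_cons, Matrix.head_fin_const]
  ring

theorem M3_pow_three_apply_zero_zero (x₁ x₂ : R) :
    (M3 σ π x₁ x₂ 0 ^ 3) 0 0 = x₁ ^ 3 + π * cyclicNorm σ x₂ := by
  simp [pow_succ, Matrix.mul_apply, Fin.sum_univ_three, M3, cyclicNorm]
  ring

theorem M3_zero_pow_three (x : R) :
    M3 σ π 0 x 0 ^ 3 = (π * cyclicNorm σ x) • 1 := by
  ext i j
  fin_cases i <;> fin_cases j <;>
    simp [pow_succ, Matrix.mul_apply, Fin.sum_univ_three, M3, cyclicNorm] <;> ring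

theorem cyclicNorm_mapRingHom_C (x : R) :
    cyclicNorm (mapRingHom σ) (C x) = C (cyclicNorm σ x) := by
  simp [cyclicNorm]

end CommRing

theorem Polynomial.degree_add_eq_max_of_degree_eq_imp {R : Type*} [Semiring R] {p q : R[X]}
    (h : p.degree = q.degree → q = 0) : (p + q).degree = max p.degree q.degree := by
  rcases lt_trichotomy p.degree q.degree with hlt | heq | hgt
  · rw [degree_add_eq_right_of_degree_lt hlt, max_eq_right hlt.le]
  · simp [h heq]
  · rw [degree_add_eq_left_of_degree_lt hgt, max_eq_left hgt.le]

theorem WithBot.eq_bot_of_add_add_add_eq {x y : WithBot ℕ} {r s : ℕ} (hrs : r % 3 ≠ s % 3)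
    (h : x + x + x + r = y + y + y + s) : y = ⊥ := by
  induction y using WithBot.recBotCoe with
  | bot => rfl
  | coe n =>
    simp only [Nat.cast_withBot, ← WithBot.coe_add] at h
    induction x using WithBot.recBotCoe with
    | bot => exact absurd h WithBot.bot_ne_coe
    | coe m =>
      rw [← WithBot.coe_add, ← WithBot.coe_add, ← WithBot.coe_add, WithBot.coe_inj] at h
      omega

section Field

variable {K : Type*} [Field K] (σ : K →+* K)

theorem degree_cyclicNorm_mapRingHom (p : K[X]) :
    (cyclicNorm (mapRingHom σ) p).degree = p.degree + p.degree + p.degree := by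
  simp only [cyclicNorm, coe_mapRingHom, degree_mul, degree_map_eq_of_injective σ.injective]

theorem degree_cyclicNorm_add_X_mul_add_X_sq_mul (a b c : K[X]) :
    (cyclicNorm (mapRingHom σ) a + X * cyclicNorm (mapRingHom σ) b
        + X ^ 2 * cyclicNorm (mapRingHom σ) c).degree =
      max (max (a.degree + a.degree + a.degree) (b.degree + b.degree + b.degree + 1))
        (c.degree + c.degree + c.degree + 2) := by
  set N := cyclicNorm (mapRingHom σ)
  have hN : ∀ p, (N p).degree = p.degree + p.degree + p.degree :=
    degree_cyclicNorm_mapRingHom σ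
  have hQ : (X * N b).degree = b.degree + b.degree + b.degree + 1 := by
    rw [degree_mul, degree_X, hN, add_comm]
  have hR : (X ^ 2 * N c).degree = c.degree + c.degree + c.degree + 2 := by
    rw [degree_mul, degree_X_pow, hN, add_comm]; rfl
  have hPQ : (N a + X * N b).degree =
      max (a.degree + a.degree + a.degree) (b.degree + b.degree + b.degree + 1) := by
    rw [degree_add_eq_max_of_degree_eq_imp, hN, hQ]
    intro h
    have hb := WithBot.eq_bot_of_add_add_add_eq (r := 0) (s := 1) (by norm_num)
      (by simpa [hN, hQ] using h)
    simp [N, degree_eq_bot.mp hb, cyclicNorm]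
  rw [degree_add_eq_max_of_degree_eq_imp, hPQ, hR]
  intro h
  suffices c.degree = ⊥ by simp [N, degree_eq_bot.mp this, cyclicNorm]
  rw [hPQ, hR] at h
  rcases max_choice (a.degree + a.degree + a.degree) (b.degree + b.degree + b.degree + 1)
    with hmax | hmax <;> rw [hmax] at h
  · exact WithBot.eq_bot_of_add_add_add_eq (r := 0) (s := 2) (by norm_num) (by simpa using h)
  · exact WithBot.eq_bot_of_add_add_add_eq (r := 1) (s := 2) (by norm_num) (by simpa using h)

theorem degree_det_M3 (a b c : K[X]) :
    (M3 (mapRingHom σ) X a b c).det.degree =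
      max (max (a.degree + a.degree + a.degree) (b.degree + b.degree + b.degree + 1))
        (c.degree + c.degree + c.degree + 2) := by
  have hnorms := degree_cyclicNorm_add_X_mul_add_X_sq_mul σ a b c
  rw [det_M3, ← hnorms]
  by_cases h0 : a = 0 ∨ b = 0 ∨ c = 0
  · rcases h0 with rfl | rfl | rfl <;> simp
  obtain ⟨ha, hb, hc⟩ := not_or.mp h0 |>.imp_right not_or.mp
  apply degree_sub_eq_left_of_degree_lt
  -- `3 (1 + deg a + deg b + deg c)` is the sum of the three distinct degrees in `hnorms`.
  calc _ ≤ 1 + (a.degree + b.degree + c.degree) := by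
        rw [degree_mul, degree_X]
        gcongr
        refine (degree_add_le _ _).trans (max_le ((degree_add_le _ _).trans (max_le ?_ ?_)) ?_)
        all_goals
          simp only [coe_mapRingHom, degree_mul, degree_map_eq_of_injective σ.injective]
          exact le_of_eq (by abel)
    _ < _ := by
        rw [hnorms, degree_eq_natDegree ha, degree_eq_natDegree hb, degree_eq_natDegree hc]
        simp only [lt_max_iff]
        norm_cast
        omega

theorem eq_C_of_natDegree_det_M3_le_one {a b c : K[X]}
    (h : (M3 (mapRingHom σ) X a b c).det.natDegree ≤ 1) :
    a = C (a.coeff 0) ∧ b = C (b.coeff 0) ∧ c = 0 := by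
  have hdeg := degree_le_of_natDegree_le h
  rw [degree_det_M3, max_le_iff, max_le_iff] at hdeg
  obtain ⟨⟨ha, hb⟩, hc⟩ := hdeg
  refine ⟨eq_C_of_degree_le_zero ?_, eq_C_of_degree_le_zero ?_, ?_⟩
  · rcases eq_or_ne a 0 with rfl | ha0
    · simp
    rw [degree_eq_natDegree ha0] at ha ⊢
    norm_cast at ha ⊢
    omega
  · rcases eq_or_ne b 0 with rfl | hb0
    · simp
    rw [degree_eq_natDegree hb0] at hb ⊢
    norm_cast at hb ⊢
    omega
  · by_contra hc0
    rw [degree_eq_natDegree hc0] at hc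
    exact absurd hc (by norm_cast)

theorem M3_pow_three_eq_X_smul_one_iff (a b c : K[X]) :
    M3 (mapRingHom σ) X a b c ^ 3 = (X : K[X]) • (1 : Matrix (Fin 3) (Fin 3) K[X]) ↔
      a = 0 ∧ c = 0 ∧ ∃ β, b = C β ∧ cyclicNorm σ β = 1 := by
  constructor
  · intro h
    have hdet : (M3 (mapRingHom σ) X a b c).det ^ 3 = X ^ 3 := by
      rw [← Matrix.det_pow, h, Matrix.det_smul, Matrix.det_one, mul_one, Fintype.card_fin]
    have hdeg : (M3 (mapRingHom σ) X a b c).det.natDegree ≤ 1 := by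
      have := congrArg natDegree hdet
      rw [natDegree_pow, natDegree_X_pow] at this
      omega
    obtain ⟨ha, hb, rfl⟩ := eq_C_of_natDegree_det_M3_le_one σ hdeg
    obtain ⟨α, rfl⟩ : ∃ α, a = C α := ⟨_, ha⟩
    obtain ⟨β, rfl⟩ : ∃ β, b = C β := ⟨_, hb⟩
    have h00 := congrFun (congrFun h 0) 0
    rw [M3_pow_three_apply_zero_zero, cyclicNorm_mapRingHom_C, ← C_pow, Matrix.smul_apply,
      Matrix.one_apply_eq, smul_eq_mul, mul_one] at h00
    have hα : α ^ 3 = 0 := by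
      simpa only [coeff_add, coeff_C_zero, coeff_X_mul_zero, coeff_X_zero, add_zero]
        using congrArg (coeff · 0) h00
    have hβ : cyclicNorm σ β = 1 := by
      simpa only [coeff_add, coeff_C_succ, coeff_X_mul, coeff_C_zero, coeff_X_one, zero_add]
        using congrArg (coeff · 1) h00
    exact ⟨by rw [pow_eq_zero_iff three_ne_zero |>.mp hα, C_0], rfl, β, rfl, hβ⟩
  · rintro ⟨rfl, rfl, β, rfl, hβ⟩
    rw [M3_zero_pow_three, cyclicNorm_mapRingHom_C, hβ, C_1, mul_one]

theorem setOf_M3_pow_three_eq_X_smul_one :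
    {x : K[X] × K[X] × K[X] | M3 (mapRingHom σ) X x.1 x.2.1 x.2.2 ^ 3 =
        (X : K[X]) • (1 : Matrix (Fin 3) (Fin 3) K[X])} =
      (fun β : K => ((0 : K[X]), C β, (0 : K[X]))) '' {β | cyclicNorm σ β = 1} := by
  ext ⟨a, b, c⟩
  simp only [Set.mem_ofPred_eq, M3_pow_three_eq_X_smul_one_iff, Set.mem_image, Prod.mk.injEq]
  constructor
  · rintro ⟨rfl, rfl, β, rfl, hβ⟩
    exact ⟨β, hβ, rfl, rfl, rfl⟩
  · rintro ⟨β, hβ, rfl, rfl, rfl⟩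
    exact ⟨rfl, rfl, β, rfl, hβ⟩

end Field

theorem FiniteField.encard_pow_eq_one {K : Type*} [Field K] [Fintype K] {n : ℕ} (hn0 : n ≠ 0)
    (hn : n ∣ Fintype.card K - 1) : {x : K | x ^ n = 1}.encard = n := by
  classical
  obtain ⟨g, hg⟩ := IsCyclic.exists_ofOrder_eq_natCard (α := Kˣ)
  rw [Nat.card_eq_fintype_card, Fintype.card_units] at hg
  have hζ : IsPrimitiveRoot ((g ^ (orderOf g / n) : Kˣ) : K) n := by
    rw [IsPrimitiveRoot.coe_units_iff, IsPrimitiveRoot.iff_orderOf,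
      orderOf_pow_orderOf_div (by have := Fintype.one_lt_card (α := K); omega) (hg ▸ hn)]
  rw [← nthRootsFinset_toSet (Nat.pos_of_ne_zero hn0), Set.encard_coe_eq_coe_finsetCard,
    hζ.card_nthRootsFinset]

open Polynomial in
theorem stmt16_general (q : ℕ)
    (Fqr : Type) [Field Fqr] [Fintype Fqr] (hcard : Fintype.card Fqr = q ^ 3)
    (σ₀ : Fqr →+* Fqr) (hσ₀ : ∀ a : Fqr, σ₀ a = a ^ q) :
    {x : Polynomial Fqr × Polynomial Fqr × Polynomial Fqr |
        (M3 (Polynomial.mapRingHom σ₀) (X : Polynomial Fqr) x.1 x.2.1 x.2.2) ^ 3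
          = (X : Polynomial Fqr) • (1 : Matrix (Fin 3) (Fin 3) (Polynomial Fqr))}.encard
      = ((q ^ 2 + q + 1 : ℕ) : ℕ∞) := by
  have hnorm : {β : Fqr | cyclicNorm σ₀ β = 1} = {β | β ^ (q ^ 2 + q + 1) = 1} := by
    ext β
    rw [Set.mem_ofPred_eq, Set.mem_ofPred_eq, cyclicNorm, hσ₀, hσ₀, ← pow_mul, ← pow_succ',
      ← pow_add, show q + 1 + q * q = q ^ 2 + q + 1 by ring]
  have hinj : Function.Injective fun β : Fqr => ((0 : Fqr[X]), C β, (0 : Fqr[X])) :=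
    fun β γ h => C_injective (congrArg (·.2.1) h)
  have hdvd : q ^ 2 + q + 1 ∣ Fintype.card Fqr - 1 := by
    rw [hcard]
    rcases q with _ | m
    · simp
    · exact Dvd.intro m (Nat.sub_eq_of_eq_add (by ring)).symm
  rw [setOf_M3_pow_three_eq_X_smul_one, hinj.encard_image, hnorm,
    FiniteField.encard_pow_eq_one (by positivity) hdvd]

open Polynomial in
/-- Section 5.1.2 (the inseparable case): for `q` a power of `3`, with `π = T` and `σ` the
coefficientwise `q`-Frobenius of `𝔽_{q³}[T]`, the set of triples `(x₁,x₂,x₃) ∈ 𝔽_{q³}[T]³`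
with `M_{(x₁,x₂,x₃)}³ = T·I₃` has exactly `q² + q + 1` elements. -/
theorem stmt16 (q : ℕ) (hq3 : ∃ k : ℕ, 0 < k ∧ q = 3 ^ k)
    (Fqr : Type) [Field Fqr] [Fintype Fqr] (hcard : Fintype.card Fqr = q ^ 3)
    (σ₀ : Fqr →+* Fqr) (hσ₀ : ∀ a : Fqr, σ₀ a = a ^ q) :
    {x : Polynomial Fqr × Polynomial Fqr × Polynomial Fqr |
        (M3 (Polynomial.mapRingHom σ₀) (X : Polynomial Fqr) x.1 x.2.1 x.2.2) ^ 3
          = (X : Polynomial Fqr) • (1 : Matrix (Fin 3) (Fin 3) (Polynomial Fqr))}.encard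
      = ((q ^ 2 + q + 1 : ℕ) : ℕ∞) :=
  stmt16_general q Fqr hcard σ₀ hσ₀
end

section
/- Let q be a prime power, H = 𝔽_{q³}(T), σ the q-Frobenius automorphism of H over F = 𝔽_q(T), and take π = T. Let β, γ ∈ 𝔽_{q³} satisfy β^{1+q+q²} = γ^{1+q+q²} = 1 and β·γ^q + β^q·γ^{q²} + β^{q²}·γ = 0 (i.e. N(β) = N(γ) = 1 and Tr(βσ(γ)) = 0). Then the matrix M_{(0,β,γ)} satisfies M_{(0,β,γ)}³ = (T² + T)·I₃; equivalently its characteristic polynomial is X³ − T(T+1). -/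
set_option maxHeartbeats 1000000


open Polynomial in
/-- Section 5.2: for `β, γ ∈ 𝔽_{q³}` with `N(β) = N(γ) = 1` and `Tr(β·σ(γ)) = 0`, the
matrix `M_{(0,β,γ)}` (with `π = T` and `σ` the coefficientwise `q`-Frobenius of
`𝔽_{q³}[T]`) satisfies `M³ = (T² + T)·I₃`; equivalently its characteristic polynomial is
`X³ − T(T+1)`. -/
theorem stmt17 (p : ℕ) (hp : p.Prime) (e : ℕ) (he : 0 < e) (q : ℕ) (hq : q = p ^ e)
    (Fqr : Type) [Field Fqr] [Fintype Fqr] (hcard : Fintype.card Fqr = q ^ 3)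
    (σ₀ : Fqr →+* Fqr) (hσ₀ : ∀ a : Fqr, σ₀ a = a ^ q)
    (β γ : Fqr) (hβ : β ^ (1 + q + q ^ 2) = 1) (hγ : γ ^ (1 + q + q ^ 2) = 1)
    (hβγ : β * γ ^ q + β ^ q * γ ^ q ^ 2 + γ * β ^ q ^ 2 = 0) :
    (M3 (Polynomial.mapRingHom σ₀) (X : Polynomial Fqr) 0 (C β) (C γ)) ^ 3
        = ((X : Polynomial Fqr) ^ 2 + X) • (1 : Matrix (Fin 3) (Fin 3) (Polynomial Fqr)) ∧
      (M3 (Polynomial.mapRingHom σ₀) (X : Polynomial Fqr) 0 (C β) (C γ)).charpoly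
        = X ^ 3 - C ((X : Polynomial Fqr) ^ 2 + X) := by
  have hb : β * β ^ q * (β ^ q) ^ q = 1 := by
    rw [← pow_mul, ← sq]
    calc β * β ^ q * β ^ q ^ 2 = β ^ (1 + q + q ^ 2) := by ring
    _ = 1 := hβ
  have hg : γ * γ ^ q * (γ ^ q) ^ q = 1 := by
    rw [← pow_mul, ← sq]
    calc γ * γ ^ q * γ ^ q ^ 2 = γ ^ (1 + q + q ^ 2) := by ring
    _ = 1 := hγ
  have htr : β * γ ^ q + β ^ q * (γ ^ q) ^ q + γ * (β ^ q) ^ q = 0 := by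
    rw [← pow_mul, ← pow_mul, ← sq]; exact hβγ
  have hb' : (C β : Polynomial Fqr) * (C β) ^ q * ((C β) ^ q) ^ q = 1 := by
    simpa only [map_mul, map_one, map_pow] using congrArg (C : Fqr →+* Polynomial Fqr) hb
  have hg' : (C γ : Polynomial Fqr) * (C γ) ^ q * ((C γ) ^ q) ^ q = 1 := by
    simpa only [map_mul, map_one, map_pow] using congrArg (C : Fqr →+* Polynomial Fqr) hg
  have htr' : (C β : Polynomial Fqr) * (C γ) ^ q + (C β) ^ q * ((C γ) ^ q) ^ q
      + C γ * ((C β) ^ q) ^ q = 0 := by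
    simpa only [map_mul, map_add, map_zero, map_pow]
      using congrArg (C : Fqr →+* Polynomial Fqr) htr
  constructor
  · refine Matrix.ext fun i j => ?_
    fin_cases i <;> fin_cases j <;>
      simp [M3, pow_succ, Matrix.mul_apply, Fin.sum_univ_three, Matrix.smul_apply,
        Matrix.one_apply, hσ₀, map_C, map_X] <;>
      first
      | linear_combination (X : Polynomial Fqr) ^ 2 * hg' + (X : Polynomial Fqr) * hb'
      | linear_combination (X : Polynomial Fqr) * C β * htr'
      | linear_combination (X : Polynomial Fqr) * C γ * htr'
      | linear_combination (X : Polynomial Fqr) ^ 2 * (C γ) ^ q * htr'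
      | linear_combination (X : Polynomial Fqr) * (C β) ^ q * htr'
      | linear_combination (X : Polynomial Fqr) ^ 2 * ((C β) ^ q) ^ q * htr'
      | linear_combination (X : Polynomial Fqr) ^ 2 * ((C γ) ^ q) ^ q * htr'
  · rw [Matrix.charpoly, Matrix.det_fin_three]
    simp [Matrix.charmatrix, M3, hσ₀, map_C, map_X]
    have Hb := congrArg (C : Polynomial Fqr →+* Polynomial (Polynomial Fqr)) hb'
    have Hg := congrArg (C : Polynomial Fqr →+* Polynomial (Polynomial Fqr)) hg'
    have Htr := congrArg (C : Polynomial Fqr →+* Polynomial (Polynomial Fqr)) htr'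
    simp only [map_mul, map_add, map_one, map_zero, map_pow] at Hb Hg Htr
    linear_combination (-(X : Polynomial (Polynomial Fqr)) * C (X : Polynomial Fqr)) * Htr
      - C (X : Polynomial Fqr) * Hb - C (X : Polynomial Fqr) ^ 2 * Hg
end
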